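/- If ℬ is a collection of pairwise disjoint blocks each contained in A, which is maximal among such collections, then the union ⋃ℬ is contained in the lateral lower approximation A^{l̆}, and (⋃ℬ)^{l̆} = ⋃ℬ. -/
import Mathlib


def IsTClique {S : Type*} (T : S → S → Prop) (B : Set S) : Prop :=
  ∀ x ∈ B, ∀ y ∈ B, T x y

def IsBlock {S : Type*} (T : S → S → Prop) (B : Set S) : Prop :=
  IsTClique T B ∧ ∀ C : Set S, IsTClique T C → B ⊆ C → B = C

def latLower {S : Type*} (T : S → S → Prop) (A : Set S) : Set S :=
  ⋃ B ∈ {B : Set S | IsBlock T B ∧ B ⊆ A}, B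

def latUpper {S : Type*} (T : S → S → Prop) (A : Set S) : Set S :=
  ⋃ B ∈ {B : Set S | IsBlock T B ∧ (B ∩ A).Nonempty}, B

def Admissible {S : Type*} (T : S → S → Prop) (A : Set S) (ℬ : Set (Set S)) : Prop :=
  (∀ B ∈ ℬ, IsBlock T B ∧ B ⊆ A) ∧
    ∀ B₁ ∈ ℬ, ∀ B₂ ∈ ℬ, B₁ ≠ B₂ → B₁ ∩ B₂ = ∅

theorem maximal_admissible_union {S : Type*} (T : S → S → Prop)
    (A : Set S) (ℬ : Set (Set S)) (hadm : Admissible T A ℬ)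
    (hmax : ∀ 𝒞 : Set (Set S), Admissible T A 𝒞 → ℬ ⊆ 𝒞 → ℬ = 𝒞) :
    (⋃ B ∈ ℬ, B) ⊆ latLower T A ∧ latLower T (⋃ B ∈ ℬ, B) = ⋃ B ∈ ℬ, B := by
  obtain ⟨h1, _⟩ := hadm
  constructor
  · intro x hx
    simp only [Set.mem_iUnion] at hx
    obtain ⟨B, hB, hxB⟩ := hx
    simp only [latLower, Set.mem_iUnion, Set.mem_setOf_eq]
    exact ⟨B, ⟨(h1 B hB).1, (h1 B hB).2⟩, hxB⟩
  · apply subset_antisymm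
    · intro x hx
      simp only [latLower, Set.mem_iUnion, Set.mem_setOf_eq] at hx
      obtain ⟨B, ⟨_, hBU⟩, hxB⟩ := hx
      exact hBU hxB
    · intro x hx
      simp only [Set.mem_iUnion] at hx
      obtain ⟨B, hB, hxB⟩ := hx
      simp only [latLower, Set.mem_iUnion, Set.mem_setOf_eq]
      exact ⟨B, ⟨(h1 B hB).1, Set.subset_biUnion_of_mem (u := fun B => B) hB⟩, hxB⟩
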